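/- Uniform initial condition for model A: let (A_n)_n be a realization of model A whose initial configuration A_0 has i.i.d. coordinates uniform on {0,1} (independent of the updates). Then for every n ∈ ℕ, P(A_{0,n}A_{1,n} ∈ {00,11}) = d_n/2, where d_n = 4^{−n} C(2n+1,n). Equivalently, for model B started from the product measure with i.i.d. coordinates uniform on {∘,•}, the density of particles at time n is d_n/2. -/

import Mathlib

open MeasureTheory ProbabilityTheory

/-!
Conventions: a configuration of model A is `x : ℤ → Bool` (`false` = 0, `true` = 1);
a configuration of model B is `y : ℤ → Bool` (`false` = ∘, `true` = •);
an update is `u : ℤ → Bool` (`true` = ↑, `false` = →).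
For each model, the initial coordinates and all the updates form one jointly
independent family of uniform Bernoulli random variables, indexed by
`ℤ ⊕ (ℤ × ℕ)`: the `Sum.inl i` coordinates give the initial configuration and the
`Sum.inr (i, n)` coordinates give the updates.
-/

/-- The local map `𝒜` of model A. -/
def modelA (x u : ℤ → Bool) : ℤ → Bool := fun i =>
  if x (i - 1) = x i then xor (x i) (u i) else x (i - 1)

/-- The local map `ℬ` of model B: the `i`-th coordinate of `ℬ(y,u)` is `•` iff
`(y_{i-1}y_i, u_{i-1}u_i) ∈ {(•∘, →⋅), (∘•, ⋅↑), (••, ↑↑), (••, →→)}`. -/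
def modelB (y u : ℤ → Bool) : ℤ → Bool := fun i =>
  match y (i - 1), y i with
  | true, false => !u (i - 1)
  | false, true => u i
  | true, true => u (i - 1) == u i
  | false, false => false

/-!
Writing `z_i = [x_{i-1} = x_i]` turns model A into model B: both become the linear cellular
automaton `z'_i = z_{i-1} [u_{i-1} = →] + z_i [u_i = ↑]` over `ZMod 2`. Summed over an interval
`[a, e)` this rule telescopes, and the interval moves back in time with each endpoint `c` going to
`c - 1` exactly when `u_{c-1} = →`. So the state at site `j` and time `n` is the initial parity over
`[a_n, e_n)`, where `a_n, e_n` are two coalescing lazy walks started at `j, j + 1` and driven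
backwards by the updates. On a nonempty interval the initial parity contains the fair bit at site
`e - 1` exactly once, so it is a fair coin independent of the updates, and the probability is half
the probability that the walks have not met by time `n`. Their gap is a lazy walk with steps `±1`
of probability `1/4`, absorbed at `0`; by the reflection principle it survives from gap `w` on
`∑_{n+1-w ≤ k < n+1+w} C(2n, k)` of the `4^n` outcomes, which is `C(2n+1, n)` for `w = 1`.
-/

namespace ModelAB

open Finset
open scoped ENNReal

/-! ### Counting surviving paths -/

lemma sum_Ico_consecutive_of_le {α M : Type*} [LinearOrder α] [LocallyFiniteOrder α]
    [AddCommMonoid M] (f : α → M) {a b c : α} (hab : a ≤ b) (hbc : b ≤ c) :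
    ∑ i ∈ Ico a b, f i + ∑ i ∈ Ico b c, f i = ∑ i ∈ Ico a c, f i := by
  rw [← sum_union (Ico_disjoint_Ico_consecutive a b c), Ico_union_Ico_eq_Ico hab hbc]

lemma sum_Ico_add_sum_Ico_of_le {α M : Type*} [LinearOrder α] [LocallyFiniteOrder α]
    [AddCommMonoid M] (f : α → M) {a b c d : α} (hab : a ≤ b) (hbc : b ≤ c) (hcd : c ≤ d) :
    ∑ i ∈ Ico a c, f i + ∑ i ∈ Ico b d, f i = ∑ i ∈ Ico a d, f i + ∑ i ∈ Ico b c, f i := by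
  rw [← sum_Ico_consecutive_of_le f hab hbc, ← sum_Ico_consecutive_of_le f hbc hcd,
    ← sum_Ico_consecutive_of_le f hab (hbc.trans hcd), ← sum_Ico_consecutive_of_le f hbc hcd]
  abel

lemma sum_Ico_sub {α M : Type*} [AddCommGroup α] [PartialOrder α] [IsOrderedAddMonoid α]
    [LocallyFiniteOrder α] [AddCommMonoid M] (f : α → M) (a b c : α) :
    ∑ i ∈ Ico a b, f (i - c) = ∑ i ∈ Ico (a - c) (b - c), f i := by
  simpa [sub_eq_add_neg] using sum_Ico_add' f a b (-c)

def zchoose (N : ℕ) (k : ℤ) : ℕ := if 0 ≤ k then N.choose k.toNat else 0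

lemma zchoose_succ (N : ℕ) (k : ℤ) : zchoose (N + 1) k = zchoose N (k - 1) + zchoose N k := by
  unfold zchoose
  rcases lt_trichotomy k 0 with hk | rfl | hk
  · rw [if_neg (by omega), if_neg (by omega), if_neg (by omega)]
  · simp
  · obtain ⟨m, rfl⟩ : ∃ m : ℕ, k = m + 1 := ⟨(k - 1).toNat, by omega⟩
    rw [if_pos (by omega), if_pos (by omega), if_pos (by omega),
      show ((m : ℤ) + 1).toNat = m + 1 by omega, show ((m : ℤ) + 1 - 1).toNat = m by omega,
      Nat.choose_succ_succ]

lemma zchoose_add_two (N : ℕ) (k : ℤ) :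
    zchoose (N + 2) k = zchoose N (k - 2) + 2 * zchoose N (k - 1) + zchoose N k := by
  rw [zchoose_succ, zchoose_succ, zchoose_succ, show k - 1 - 1 = k - 2 by ring]
  ring

/-- Out of the `4 ^ n` outcomes of `n` pairs of fair coin flips, the number along which the gap
between two coalescing lazy walks started `w` apart stays positive (reflection principle). -/
noncomputable def survivalCount (n : ℕ) (w : ℤ) : ℕ :=
  ∑ k ∈ Ico (n + 1 - w) (n + 1 + w), zchoose (2 * n) k

lemma survivalCount_of_nonpos (n : ℕ) {w : ℤ} (hw : w ≤ 0) : survivalCount n w = 0 := by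
  rw [survivalCount, Ico_eq_empty (by omega), sum_empty]

lemma survivalCount_zero {w : ℤ} (hw : 0 < w) : survivalCount 0 w = 1 := by
  rw [survivalCount, sum_eq_single_of_mem (0 : ℤ) (by simp; omega)]
  · simp [zchoose]
  · intro k _ hk
    unfold zchoose
    split_ifs
    · exact Nat.choose_eq_zero_of_lt (by omega)
    · rfl

lemma survivalCount_succ (n : ℕ) {w : ℤ} (hw : 0 < w) :
    survivalCount (n + 1) w
      = survivalCount n (w + 1) + 2 * survivalCount n w + survivalCount n (w - 1) := by
  set S : ℤ → ℤ → ℕ := fun a b => ∑ k ∈ Ico a b, zchoose (2 * n) k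
  have hS (a b a' b' : ℤ) (ha : a = a') (hb : b = b') :
      ∑ k ∈ Ico a b, zchoose (2 * n) k = S a' b' := by rw [ha, hb]
  have hpascal : survivalCount (n + 1) w = ∑ k ∈ Ico ((n : ℤ) + 2 - w) (n + 2 + w),
      (zchoose (2 * n) (k - 2) + 2 * zchoose (2 * n) (k - 1) + zchoose (2 * n) k) := by
    rw [survivalCount, show 2 * (n + 1) = 2 * n + 2 by ring]
    simp only [zchoose_add_two]
    exact sum_congr (by push_cast; ring_nf) fun _ _ => rfl
  have hsucc : survivalCount (n + 1) w
      = S (n - w) (n + w) + 2 * S (n + 1 - w) (n + 1 + w) + S (n + 2 - w) (n + 2 + w) := by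
    rw [hpascal, sum_add_distrib, sum_add_distrib, ← mul_sum,
      sum_Ico_sub (fun k => zchoose (2 * n) k), sum_Ico_sub (fun k => zchoose (2 * n) k),
      hS _ _ (n - w) (n + w) (by ring) (by ring),
      hS _ _ (n + 1 - w) (n + 1 + w) (by ring) (by ring)]
  have hwide : survivalCount n (w + 1) = S (n - w) (n + 2 + w) := hS _ _ _ _ (by ring) (by ring)
  have hnarrow : survivalCount n (w - 1) = S (n + 2 - w) (n + w) := hS _ _ _ _ (by ring) (by ring)
  have hoverlap : S (n - w) (n + w) + S (n + 2 - w) (n + 2 + w)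
      = S (n - w) (n + 2 + w) + S (n + 2 - w) (n + w) :=
    sum_Ico_add_sum_Ico_of_le _ (by omega) (by omega) (by omega)
  rw [hsucc, hwide, hnarrow, show survivalCount n w = S (n + 1 - w) (n + 1 + w) from rfl]
  linarith [hoverlap]

lemma survivalCount_one (n : ℕ) : survivalCount n 1 = (2 * n + 1).choose n := by
  have hIco : Ico ((n : ℤ) + 1 - 1) (n + 1 + 1) = {(n : ℤ), (n : ℤ) + 1} := by
    ext k; simp; omega
  rw [survivalCount, hIco, sum_pair (by omega), ← Nat.choose_symm_half, Nat.choose_succ_succ]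
  simp [zchoose, show (0 : ℤ) ≤ n + 1 by omega, show ((n : ℤ) + 1).toNat = n + 1 by omega]

/-! ### Duality with coalescing walks -/

def bit (b : Bool) : ZMod 2 := if b then 1 else 0

@[simp] lemma bit_false : bit false = 0 := rfl

@[simp] lemma bit_true : bit true = 1 := rfl

lemma bit_eq_one {b : Bool} : bit b = 1 ↔ b = true := by cases b <;> decide

lemma bit_add_eq_one_iff (c : Bool) (r : ZMod 2) : bit c + r = 1 ↔ c = decide (r = 0) := by
  revert c r; decide

noncomputable def parity (z : ℤ → Bool) (a e : ℤ) : ZMod 2 := ∑ i ∈ Ico a e, bit (z i)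

lemma parity_of_le (z : ℤ → Bool) {a e : ℤ} (h : e ≤ a) : parity z a e = 0 := by
  rw [parity, Ico_eq_empty_of_le h, sum_empty]

lemma parity_sub_one_left (z : ℤ → Bool) {a e : ℤ} (h : a ≤ e) :
    parity z (a - 1) e = bit (z (a - 1)) + parity z a e := by
  rw [parity, ← insert_Ico_left_eq_Ico_sub_one h, sum_insert (by simp), parity]

lemma parity_sub_one_right (z : ℤ → Bool) {a e : ℤ} (h : a < e) :
    parity z a e = parity z a (e - 1) + bit (z (e - 1)) := by
  rw [parity, ← insert_Ico_sub_one_right_eq_Ico h, sum_insert (by simp), parity, add_comm]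

lemma parity_self_add_one (z : ℤ → Bool) (j : ℤ) : parity z j (j + 1) = bit (z j) := by
  rw [parity_sub_one_right z (lt_add_one j), add_sub_cancel_right, parity_of_le z le_rfl,
    zero_add]

lemma sum_Ico_add_add_one_of_charTwo {R : Type*} [CommRing R] [CharP R 2] (g : ℤ → R)
    {a e : ℤ} (h : a ≤ e) : ∑ i ∈ Ico a e, (g i + g (i + 1)) = g a + g e := by
  induction e, h using Int.leInduction with
  | base => simp [CharTwo.add_self_eq_zero]
  | succ e hae ih =>
    rw [← insert_Ico_right_eq_Ico_add_one hae, sum_insert (by simp), ih]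
    linear_combination CharTwo.add_self_eq_zero (g e)

lemma parity_beq (x : ℤ → Bool) {a e : ℤ} (h : a ≤ e) :
    parity (fun i => x (i - 1) == x i) a e = #(Ico a e) + bit (x (a - 1)) + bit (x (e - 1)) := by
  have hbit (i : ℤ) : bit (x (i - 1) == x i) = 1 + (bit (x (i - 1)) + bit (x (i + 1 - 1))) := by
    rw [add_sub_cancel_right]; cases x (i - 1) <;> cases x i <;> decide
  simp only [parity, hbit, sum_add_distrib,
    sum_Ico_add_add_one_of_charTwo (fun i => bit (x (i - 1))) h]
  simp [add_assoc]

def linearStep (v z : ℤ → Bool) (i : ℤ) : Bool := (z (i - 1) && !v (i - 1)) ^^ (z i && v i)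

def linearCA (u : ℕ → ℤ → Bool) (z : ℤ → Bool) : ℕ → ℤ → Bool
  | 0 => z
  | n + 1 => linearStep (u n) (linearCA u z n)

def dualStep (v : ℤ → Bool) (x : ℤ) : ℤ := if v (x - 1) then x else x - 1

def dualWalk (u : ℕ → ℤ → Bool) : ℕ → ℤ → ℤ
  | 0, x => x
  | n + 1, x => dualWalk u n (dualStep (u n) x)

lemma dualStep_mono (v : ℤ → Bool) : Monotone (dualStep v) := by
  intro x y hxy
  rcases hxy.eq_or_lt with rfl | hlt
  · exact le_rfl
  · unfold dualStep; split_ifs <;> omega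

lemma dualWalk_congr {u u' : ℕ → ℤ → Bool} {n : ℕ} {x : ℤ}
    (h : ∀ m < n, ∀ i ∈ Ico (x - n) x, u m i = u' m i) : dualWalk u n x = dualWalk u' n x := by
  induction n generalizing x with
  | zero => rfl
  | succ n ih =>
    have hstep : dualStep (u n) x = dualStep (u' n) x := by
      simp only [dualStep, h n (by omega) (x - 1) (mem_Ico.2 ⟨by omega, by omega⟩)]
    have hle : x - 1 ≤ dualStep (u' n) x ∧ dualStep (u' n) x ≤ x := by
      unfold dualStep; split_ifs <;> omega
    simp only [dualWalk, hstep]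
    exact ih fun m hm i hi => h m (by omega) i (by simp at hi ⊢; omega)

/-- The parity carried from site `x - 1` to site `x` by `linearStep v`. -/
def flux (v z : ℤ → Bool) (x : ℤ) : ZMod 2 := bit (z (x - 1) && !v (x - 1))

lemma bit_linearStep (v z : ℤ → Bool) (i : ℤ) :
    bit (linearStep v z i) = flux v z i + bit (z i) + flux v z (i + 1) := by
  simp only [linearStep, flux, add_sub_cancel_right]
  generalize z (i - 1) = a, v (i - 1) = b, z i = c, v i = d
  revert a b c d; decide

lemma parity_dualStep_left (v z : ℤ → Bool) {a e : ℤ} (h : a ≤ e) :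
    parity z (dualStep v a) e = flux v z a + parity z a e := by
  unfold dualStep flux
  cases v (a - 1)
  · simp [parity_sub_one_left z h]
  · simp

lemma parity_dualStep_right (v z : ℤ → Bool) {a e : ℤ} (h : a < e) :
    parity z a (dualStep v e) = parity z a e + flux v z e := by
  unfold dualStep flux
  cases v (e - 1)
  · simp [parity_sub_one_right z h, add_assoc, CharTwo.add_self_eq_zero]
  · simp

lemma parity_linearStep (v z : ℤ → Bool) {a e : ℤ} (h : a ≤ e) :
    parity (linearStep v z) a e = parity z (dualStep v a) (dualStep v e) := by
  rcases h.eq_or_lt with rfl | hlt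
  · rw [parity_of_le _ le_rfl, parity_of_le _ le_rfl]
  have hsum : parity (linearStep v z) a e = parity z a e + (flux v z a + flux v z e) := by
    simp only [parity, bit_linearStep, add_right_comm _ (bit _), sum_add_distrib,
      sum_Ico_add_add_one_of_charTwo _ h]
    ring
  have hright : a ≤ dualStep v e := by unfold dualStep; split_ifs <;> omega
  rw [hsum, parity_dualStep_left v z hright, parity_dualStep_right v z hlt]
  ring

theorem parity_linearCA (u : ℕ → ℤ → Bool) (z : ℤ → Bool) (n : ℕ) {a e : ℤ} (h : a ≤ e) :
    parity (linearCA u z n) a e = parity z (dualWalk u n a) (dualWalk u n e) := by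
  induction n generalizing a e with
  | zero => rfl
  | succ n ih => exact (parity_linearStep (u n) _ h).trans (ih (dualStep_mono (u n) h))

lemma modelB_eq_linearStep (y u : ℤ → Bool) : modelB y u = linearStep u y := by
  funext i
  simp only [modelB, linearStep]
  cases y (i - 1) <;> cases y i <;> cases u (i - 1) <;> cases u i <;> rfl

lemma modelA_beq_eq_linearStep (x u : ℤ → Bool) :
    (fun i => modelA x u (i - 1) == modelA x u i) = linearStep u fun i => x (i - 1) == x i := by
  funext i
  simp only [modelA, linearStep]
  generalize x (i - 1 - 1) = a, x (i - 1) = b, x i = c, u (i - 1) = d, u i = e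
  revert a b c d e; decide

lemma eq_linearCA_of_modelB {u y : ℕ → ℤ → Bool} (hy : ∀ n, y (n + 1) = modelB (y n) (u n))
    (n : ℕ) : y n = linearCA u (y 0) n := by
  induction n with
  | zero => rfl
  | succ n ih => rw [hy, ih, modelB_eq_linearStep]; rfl

lemma beq_eq_linearCA_of_modelA {u x : ℕ → ℤ → Bool}
    (hx : ∀ n, x (n + 1) = modelA (x n) (u n)) (n : ℕ) :
    (fun i => x n (i - 1) == x n i) = linearCA u (fun i => x 0 (i - 1) == x 0 i) n := by
  induction n with
  | zero => rfl
  | succ n ih => rw [hx, modelA_beq_eq_linearStep, ih]; rfl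

/-! ### Locality and independence -/

section Locality

variable {Ω ι : Type*} {W : ι → Ω → Bool}

def IsLocal (W : ι → Ω → Bool) (S : Finset ι) {γ : Type*} (F : Ω → γ) : Prop :=
  ∃ f : (ι → Bool) → γ, DependsOn f (S : Set ι) ∧ ∀ ω, F ω = f fun j => W j ω

namespace IsLocal

variable {S T : Finset ι} {γ δ : Type*} {F : Ω → γ} {G : Ω → δ}

lemma exists_eq_comp (h : IsLocal W S F) :
    ∃ φ : (S → Bool) → γ, F = fun ω => φ fun j => W j ω := by
  classical
  obtain ⟨f, hf, hF⟩ := h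
  refine ⟨fun c => f fun j => if hj : j ∈ S then c ⟨j, hj⟩ else false, funext fun ω => ?_⟩
  rw [hF ω]
  exact hf fun j hj => by simp [Finset.mem_coe.1 hj]

lemma measurable [MeasurableSpace Ω] [MeasurableSpace γ] (hW : ∀ j, Measurable (W j))
    (h : IsLocal W S F) : Measurable F := by
  obtain ⟨φ, rfl⟩ := h.exists_eq_comp
  exact (measurable_of_countable φ).comp (measurable_pi_lambda _ fun j => hW j)

lemma indepFun [MeasurableSpace Ω] [MeasurableSpace γ] [MeasurableSpace δ] {P : Measure Ω}
    (hW : ∀ j, Measurable (W j)) (hind : iIndepFun W P) (hF : IsLocal W S F)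
    (hG : IsLocal W T G) (hST : Disjoint S T) : IndepFun F G P := by
  obtain ⟨φ, rfl⟩ := hF.exists_eq_comp
  obtain ⟨ψ, rfl⟩ := hG.exists_eq_comp
  exact (hind.indepFun_finset S T hST hW).comp (measurable_of_countable φ)
    (measurable_of_countable ψ)

lemma comp (φ : γ → δ) (h : IsLocal W S F) : IsLocal W S fun ω => φ (F ω) := by
  obtain ⟨f, hf, hF⟩ := h
  exact ⟨φ ∘ f, fun c c' hcc => congrArg φ (hf hcc), fun ω => congrArg φ (hF ω)⟩

lemma prodMk [DecidableEq ι] (hF : IsLocal W S F) (hG : IsLocal W T G) :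
    IsLocal W (S ∪ T) fun ω => (F ω, G ω) := by
  obtain ⟨f, hf, hF⟩ := hF
  obtain ⟨g, hg, hG⟩ := hG
  refine ⟨fun c => (f c, g c), fun c c' hcc => ?_, fun ω => Prod.ext (hF ω) (hG ω)⟩
  exact Prod.ext (hf fun j hj => hcc j (by simp [Finset.mem_coe.1 hj]))
    (hg fun j hj => hcc j (by simp [Finset.mem_coe.1 hj]))

end IsLocal

lemma isLocal_coord (j : ι) : IsLocal W {j} (W j) :=
  ⟨fun c => c j, fun _ _ h => h j (by simp), fun _ => rfl⟩

lemma isLocal_parity [DecidableEq ι] {Z : Ω → ℤ → Bool} {K : ℤ → Finset ι}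
    (hZ : ∀ i, IsLocal W (K i) fun ω => Z ω i) (a e : ℤ) :
    IsLocal W ((Ico a e).biUnion K) fun ω => parity (Z ω) a e := by
  choose f hf hF using hZ
  refine ⟨fun c => ∑ i ∈ Ico a e, bit (f i c), fun c c' hcc => sum_congr rfl fun i hi => ?_,
    fun ω => sum_congr rfl fun i _ => congrArg bit (hF i ω)⟩
  rw [hf i fun j hj => hcc j (by simpa using ⟨i, mem_Ico.1 hi, hj⟩)]

lemma measure_setOf_mem_eq_tsum [MeasurableSpace Ω] {α : Type*} [Countable α]
    [MeasurableSpace α] [MeasurableSingletonClass α] (μ : Measure Ω) {D : Ω → α}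
    (hD : Measurable D) {E : α → Set Ω} (hE : ∀ p, MeasurableSet (E p)) :
    μ {ω | ω ∈ E (D ω)} = ∑' p, μ (E p ∩ D ⁻¹' {p}) := by
  have hunion : {ω | ω ∈ E (D ω)} = ⋃ p, E p ∩ D ⁻¹' {p} := by
    ext ω; simp
  rw [hunion, measure_iUnion _ fun p => (hE p).inter (hD (measurableSet_singleton p))]
  intro p q hpq
  exact Disjoint.mono Set.inter_subset_right Set.inter_subset_right
    ((Set.disjoint_singleton.2 hpq).preimage D)

variable [MeasurableSpace Ω] {P : Measure Ω} [IsProbabilityMeasure P]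

lemma measure_coord_eq (hW : ∀ j, Measurable (W j))
    (hunif : ∀ j, P {ω | W j ω = true} = 1 / 2) (j : ι) (c : Bool) :
    P {ω | W j ω = c} = 2⁻¹ := by
  cases c
  · have hcompl : {ω | W j ω = false} = {ω | W j ω = true}ᶜ := by ext; simp
    rw [hcompl, prob_compl_eq_one_sub (s := {ω | W j ω = true})
      (hW j (measurableSet_singleton true)), hunif, one_div, ENNReal.one_sub_inv_two]
  · rw [hunif, one_div]

lemma measure_pair_eq (hW : ∀ j, Measurable (W j)) (hind : iIndepFun W P)
    (hunif : ∀ j, P {ω | W j ω = true} = 1 / 2) {j k : ι} (hjk : j ≠ k) (c : Bool × Bool) :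
    P ((fun ω => (W j ω, W k ω)) ⁻¹' {c}) = 4⁻¹ := by
  have hpair : (fun ω => (W j ω, W k ω)) ⁻¹' {c} = W j ⁻¹' {c.1} ∩ W k ⁻¹' {c.2} := by
    ext; simp [Prod.ext_iff]
  have hjk' := (isLocal_coord j).indepFun hW hind (isLocal_coord k) (by simpa using hjk)
  rw [hpair, hjk'.measure_inter_preimage_eq_mul _ _ (measurableSet_singleton _)
    (measurableSet_singleton _)]
  change P {ω | W j ω = c.1} * P {ω | W k ω = c.2} = 4⁻¹
  rw [measure_coord_eq hW hunif, measure_coord_eq hW hunif,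
    ← ENNReal.mul_inv (by simp) (by simp)]
  norm_num

lemma measure_bit_add_eq_half (hW : ∀ j, Measurable (W j)) (hind : iIndepFun W P)
    (hunif : ∀ j, P {ω | W j ω = true} = 1 / 2) {b : ι} {S : Finset ι} {R : Ω → ZMod 2}
    (hR : IsLocal W S R) (hb : b ∉ S) :
    P {ω | bit (W b ω) + R ω = 1} = 2⁻¹ := by
  have hindep := (isLocal_coord b).indepFun hW hind hR (by simpa using hb)
  have hset : {ω | bit (W b ω) + R ω = 1} = {ω | ω ∈ W b ⁻¹' {decide (R ω = 0)}} := by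
    ext; simp [bit_add_eq_one_iff]
  rw [hset, measure_setOf_mem_eq_tsum P (hR.measurable hW)
    (E := fun r => W b ⁻¹' {decide (r = 0)}) fun r => hW b (measurableSet_singleton _)]
  calc ∑' r, P (W b ⁻¹' {decide (r = 0)} ∩ R ⁻¹' {r})
      = ∑' r, 2⁻¹ * P (R ⁻¹' {r}) := tsum_congr fun r => by
        rw [hindep.measure_inter_preimage_eq_mul _ _ (measurableSet_singleton _)
          (measurableSet_singleton _)]
        exact congrArg (· * _) (measure_coord_eq hW hunif b _)
    _ = 2⁻¹ := by
        rw [ENNReal.tsum_mul_left, tsum_fintype, sum_measure_preimage_singleton _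
          fun r _ => hR.measurable hW (measurableSet_singleton r)]
        simp

end Locality

/-! ### The realizations -/

section Realization

variable {Ω : Type*} {W : ℤ ⊕ ℤ × ℕ → Ω → Bool}

def updates (W : ℤ ⊕ ℤ × ℕ → Ω → Bool) (ω : Ω) (n : ℕ) (i : ℤ) : Bool := W (Sum.inr (i, n)) ω

noncomputable def updateWindow (n : ℕ) (a e : ℤ) : Finset (ℤ ⊕ ℤ × ℕ) :=
  (Ico (a - n) e ×ˢ range n).image Sum.inr

lemma isLocal_dualWalk (n : ℕ) {a e : ℤ} (h : a ≤ e) :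
    IsLocal W (updateWindow n a e)
      fun ω => (dualWalk (updates W ω) n a, dualWalk (updates W ω) n e) := by
  have hwalk (x : ℤ) (hax : a ≤ x) (hxe : x ≤ e) (c c' : ℤ ⊕ ℤ × ℕ → Bool)
      (hcc : ∀ j ∈ (updateWindow n a e : Set (ℤ ⊕ ℤ × ℕ)), c j = c' j) :
      dualWalk (fun m i => c (Sum.inr (i, m))) n x
        = dualWalk (fun m i => c' (Sum.inr (i, m))) n x :=
    dualWalk_congr fun m hm i hi => hcc _ (by simp [updateWindow] at hi ⊢; omega)
  exact ⟨fun c => (dualWalk (fun m i => c (Sum.inr (i, m))) n a,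
      dualWalk (fun m i => c (Sum.inr (i, m))) n e),
    fun c c' hcc => Prod.ext (hwalk a le_rfl h c c' hcc) (hwalk e h le_rfl c c' hcc),
    fun _ => rfl⟩

variable [MeasurableSpace Ω] {P : Measure Ω}

theorem measure_parity_dualWalk (hW : ∀ j, Measurable (W j)) (hind : iIndepFun W P)
    {Z : Ω → ℤ → Bool} (hZloc : ∀ i, ∃ K : Finset ℤ, IsLocal W (K.image Sum.inl) fun ω => Z ω i)
    (hfair : ∀ a e, a < e → P {ω | parity (Z ω) a e = 1} = 2⁻¹) (n : ℕ) {a e : ℤ}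
    (h : a ≤ e) :
    P {ω | parity (Z ω) (dualWalk (updates W ω) n a) (dualWalk (updates W ω) n e) = 1}
      = 2⁻¹ * P {ω | dualWalk (updates W ω) n a < dualWalk (updates W ω) n e} := by
  choose K hK using hZloc
  set D : Ω → ℤ × ℤ := fun ω => (dualWalk (updates W ω) n a, dualWalk (updates W ω) n e)
  have hD : IsLocal W (updateWindow n a e) D := isLocal_dualWalk n h
  have hpar (p : ℤ × ℤ) := isLocal_parity hK p.1 p.2
  have hdisj (p : ℤ × ℤ) :
      Disjoint ((Ico p.1 p.2).biUnion fun i => (K i).image Sum.inl) (updateWindow n a e) := by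
    simp [updateWindow, disjoint_left]
  calc P {ω | parity (Z ω) (D ω).1 (D ω).2 = 1}
      = ∑' p, P ((fun ω => parity (Z ω) p.1 p.2) ⁻¹' {1} ∩ D ⁻¹' {p}) :=
        measure_setOf_mem_eq_tsum P (hD.measurable hW)
          fun p => (hpar p).measurable hW (measurableSet_singleton 1)
    _ = ∑' p, 2⁻¹ * P ({_ω | p.1 < p.2} ∩ D ⁻¹' {p}) := tsum_congr fun p => ?_
    _ = 2⁻¹ * P {ω | (D ω).1 < (D ω).2} := by
        rw [ENNReal.tsum_mul_left]
        exact congrArg _ (measure_setOf_mem_eq_tsum P (hD.measurable hW)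
          (E := fun p => {_ω | p.1 < p.2}) fun p => MeasurableSet.const _).symm
  by_cases hp : p.1 < p.2
  · rw [((hpar p).indepFun hW hind hD (hdisj p)).measure_inter_preimage_eq_mul _ _
      (measurableSet_singleton _) (measurableSet_singleton _)]
    simp only [hp, Set.ofPred_true, Set.univ_inter]
    exact congrArg (· * _) (hfair p.1 p.2 hp)
  · have hempty : (fun ω => parity (Z ω) p.1 p.2) ⁻¹' {1} = ∅ := by
      ext; simp [parity_of_le _ (not_lt.1 hp)]
    simp [hempty, hp]

variable [IsProbabilityMeasure P]

lemma measure_dualWalk_lt_succ (hW : ∀ j, Measurable (W j)) (hind : iIndepFun W P)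
    (hunif : ∀ j, P {ω | W j ω = true} = 1 / 2) (n : ℕ) {a e : ℤ} (h : a < e) :
    P {ω | dualWalk (updates W ω) (n + 1) a < dualWalk (updates W ω) (n + 1) e}
      = ∑ c : Bool × Bool, 4⁻¹ * P {ω | dualWalk (updates W ω) n (if c.1 then a else a - 1)
          < dualWalk (updates W ω) n (if c.2 then e else e - 1)} := by
  set D : Ω → Bool × Bool := fun ω => (W (Sum.inr (a - 1, n)) ω, W (Sum.inr (e - 1, n)) ω)
  set F : Bool × Bool → Ω → ℤ × ℤ := fun c ω =>
    (dualWalk (updates W ω) n (if c.1 then a else a - 1),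
      dualWalk (updates W ω) n (if c.2 then e else e - 1))
  have hF (c : Bool × Bool) : IsLocal W (updateWindow n (if c.1 then a else a - 1)
      (if c.2 then e else e - 1)) (F c) :=
    isLocal_dualWalk n (by split_ifs <;> omega)
  have hD : IsLocal W ({Sum.inr (a - 1, n)} ∪ {Sum.inr (e - 1, n)}) D :=
    (isLocal_coord _).prodMk (isLocal_coord _)
  have hlt : MeasurableSet {p : ℤ × ℤ | p.1 < p.2} := MeasurableSet.of_discrete
  calc P {ω | dualWalk (updates W ω) (n + 1) a < dualWalk (updates W ω) (n + 1) e}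
      = ∑' c, P (F c ⁻¹' {p | p.1 < p.2} ∩ D ⁻¹' {c}) :=
        measure_setOf_mem_eq_tsum P (hD.measurable hW) fun c => (hF c).measurable hW hlt
    _ = ∑ c, 4⁻¹ * P (F c ⁻¹' {p | p.1 < p.2}) := by
        rw [tsum_fintype]
        refine sum_congr rfl fun c _ => ?_
        have hdisj : Disjoint (updateWindow n (if c.1 then a else a - 1)
            (if c.2 then e else e - 1)) ({Sum.inr (a - 1, n)} ∪ {Sum.inr (e - 1, n)}) := by
          simp only [updateWindow, disjoint_left, mem_image, mem_union, mem_singleton]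
          rintro _ ⟨⟨i, m⟩, him, rfl⟩ (hj | hj) <;> simp at him hj <;> omega
        rw [((hF c).indepFun hW hind hD hdisj).measure_inter_preimage_eq_mul _ _ hlt
            (measurableSet_singleton c),
          measure_pair_eq hW hind hunif (by simp; omega), mul_comm]

theorem measure_dualWalk_lt (hW : ∀ j, Measurable (W j)) (hind : iIndepFun W P)
    (hunif : ∀ j, P {ω | W j ω = true} = 1 / 2) (n : ℕ) {a e : ℤ} (h : a ≤ e) :
    4 ^ n * P {ω | dualWalk (updates W ω) n a < dualWalk (updates W ω) n e}
      = survivalCount n (e - a) := by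
  induction n generalizing a e with
  | zero =>
    rcases h.eq_or_lt with rfl | hlt
    · simp [dualWalk, survivalCount_of_nonpos]
    · simp [dualWalk, hlt, survivalCount_zero]
  | succ n ih =>
    rcases h.eq_or_lt with rfl | hlt
    · simp [survivalCount_of_nonpos]
    rw [measure_dualWalk_lt_succ hW hind hunif n hlt, mul_sum]
    have hterm (c : Bool × Bool) : 4 ^ (n + 1) * (4⁻¹ * P {ω | dualWalk (updates W ω) n
        (if c.1 then a else a - 1) < dualWalk (updates W ω) n (if c.2 then e else e - 1)})
        = survivalCount n ((if c.2 then e else e - 1) - (if c.1 then a else a - 1)) := by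
      rw [← ih (by split_ifs <;> omega), pow_succ, mul_assoc, ← mul_assoc 4,
        ENNReal.mul_inv_cancel (by norm_num) (by norm_num), one_mul]
    simp only [hterm, Fintype.sum_prod_type, Fintype.sum_bool, if_true, Bool.false_eq_true,
      if_false]
    rw [survivalCount_succ n (sub_pos.2 hlt), show e - (a - 1) = e - a + 1 by ring,
      show e - 1 - a = e - a - 1 by ring, show e - 1 - (a - 1) = e - a by ring]
    push_cast
    ring

theorem measure_linearCA_eq (hW : ∀ j, Measurable (W j)) (hind : iIndepFun W P)
    (hunif : ∀ j, P {ω | W j ω = true} = 1 / 2) {Z : Ω → ℤ → Bool}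
    (hZloc : ∀ i, ∃ K : Finset ℤ, IsLocal W (K.image Sum.inl) fun ω => Z ω i)
    (hfair : ∀ a e, a < e → P {ω | parity (Z ω) a e = 1} = 2⁻¹) (n : ℕ) (j : ℤ) :
    P {ω | linearCA (updates W ω) (Z ω) n j = true}
      = ((2 * n + 1).choose n : ℝ≥0∞) / (2 * 4 ^ n) := by
  have hset : {ω | linearCA (updates W ω) (Z ω) n j = true} = {ω | parity (Z ω)
      (dualWalk (updates W ω) n j) (dualWalk (updates W ω) n (j + 1)) = 1} := by
    ext ω
    rw [Set.mem_ofPred_eq, Set.mem_ofPred_eq, ← parity_linearCA _ _ n (lt_add_one j).le,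
      parity_self_add_one, bit_eq_one]
  have hsurv := measure_dualWalk_lt hW hind hunif n (lt_add_one j).le
  rw [add_sub_cancel_left, survivalCount_one] at hsurv
  rw [hset, measure_parity_dualWalk hW hind hZloc hfair n (lt_add_one j).le, ← hsurv,
    mul_comm 2, ENNReal.mul_div_mul_left _ _ (by positivity) (by simp), ENNReal.div_eq_inv_mul]

lemma measure_parity_coord_eq_half (hW : ∀ j, Measurable (W j)) (hind : iIndepFun W P)
    (hunif : ∀ j, P {ω | W j ω = true} = 1 / 2) {a e : ℤ} (h : a < e) :
    P {ω | parity (fun i => W (Sum.inl i) ω) a e = 1} = 2⁻¹ := by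
  have hR := isLocal_parity (W := W) (Z := fun ω i => W (Sum.inl i) ω)
    (fun i => isLocal_coord (Sum.inl i)) a (e - 1)
  simp_rw [parity_sub_one_right _ h, add_comm _ (bit _)]
  exact measure_bit_add_eq_half hW hind hunif hR (by simp)

lemma measure_parity_beq_eq_half (hW : ∀ j, Measurable (W j)) (hind : iIndepFun W P)
    (hunif : ∀ j, P {ω | W j ω = true} = 1 / 2) {a e : ℤ} (h : a < e) :
    P {ω | parity (fun i => W (Sum.inl (i - 1)) ω == W (Sum.inl i) ω) a e = 1} = 2⁻¹ := by
  have hR : IsLocal W {Sum.inl (a - 1)}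
      fun ω => (#(Ico a e) : ZMod 2) + bit (W (Sum.inl (a - 1)) ω) :=
    (isLocal_coord (Sum.inl (a - 1))).comp fun b => (#(Ico a e) : ZMod 2) + bit b
  have hset : {ω | parity (fun i => W (Sum.inl (i - 1)) ω == W (Sum.inl i) ω) a e = 1}
      = {ω | bit (W (Sum.inl (e - 1)) ω) + (#(Ico a e) + bit (W (Sum.inl (a - 1)) ω)) = 1} := by
    ext ω
    rw [Set.mem_ofPred_eq, Set.mem_ofPred_eq, parity_beq (fun i => W (Sum.inl i) ω) h.le,
      add_comm]
  rw [hset]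
  exact measure_bit_add_eq_half hW hind hunif hR (by simp; omega)

theorem measure_modelA_eq (hW : ∀ j, Measurable (W j)) (hind : iIndepFun W P)
    (hunif : ∀ j, P {ω | W j ω = true} = 1 / 2) {A : ℕ → Ω → ℤ → Bool}
    (hA0 : ∀ ω i, A 0 ω i = W (Sum.inl i) ω)
    (hA : ∀ n ω, A (n + 1) ω = modelA (A n ω) (updates W ω n)) (n : ℕ) :
    P {ω | A n ω 0 = A n ω 1} = ((2 * n + 1).choose n : ℝ≥0∞) / (2 * 4 ^ n) := by
  have hset : {ω | A n ω 0 = A n ω 1} = {ω | linearCA (updates W ω)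
      (fun i => W (Sum.inl (i - 1)) ω == W (Sum.inl i) ω) n 1 = true} := by
    ext ω
    have hrep := congrFun (beq_eq_linearCA_of_modelA (x := fun m => A m ω) (u := updates W ω)
      (fun m => hA m ω) n) 1
    simp only [hA0, sub_self] at hrep
    rw [Set.mem_ofPred_eq, Set.mem_ofPred_eq, ← hrep, beq_iff_eq]
  have hloc (i : ℤ) : IsLocal W (({i - 1, i} : Finset ℤ).image Sum.inl)
      fun ω => W (Sum.inl (i - 1)) ω == W (Sum.inl i) ω :=
    ⟨fun c => c (Sum.inl (i - 1)) == c (Sum.inl i),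
      fun c c' hcc => by dsimp only; rw [hcc _ (by simp), hcc _ (by simp)], fun _ => rfl⟩
  rw [hset]
  exact measure_linearCA_eq hW hind hunif (fun i => ⟨_, hloc i⟩)
    (fun _ _ h => measure_parity_beq_eq_half hW hind hunif h) n 1

theorem measure_modelB_eq (hW : ∀ j, Measurable (W j)) (hind : iIndepFun W P)
    (hunif : ∀ j, P {ω | W j ω = true} = 1 / 2) {Y : ℕ → Ω → ℤ → Bool}
    (hY0 : ∀ ω i, Y 0 ω i = W (Sum.inl i) ω)
    (hY : ∀ n ω, Y (n + 1) ω = modelB (Y n ω) (updates W ω n)) (n : ℕ) :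
    P {ω | Y n ω 0 = true} = ((2 * n + 1).choose n : ℝ≥0∞) / (2 * 4 ^ n) := by
  have hset : {ω | Y n ω 0 = true}
      = {ω | linearCA (updates W ω) (fun i => W (Sum.inl i) ω) n 0 = true} := by
    ext ω
    rw [Set.mem_ofPred_eq, Set.mem_ofPred_eq,
      eq_linearCA_of_modelB (y := fun m => Y m ω) (u := updates W ω) (fun m => hY m ω) n,
      show Y 0 ω = fun i => W (Sum.inl i) ω from funext (hY0 ω)]
  rw [hset]
  exact measure_linearCA_eq hW hind hunif (fun i => ⟨{i}, by simpa using isLocal_coord _⟩)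
    (fun _ _ h => measure_parity_coord_eq_half hW hind hunif h) n 0

end Realization

end ModelAB

/-- for the realization of model A whose initial configuration has
i.i.d. coordinates uniform on `{0,1}`, independent of the i.i.d. uniform updates, one
has `P(A_{0,n} A_{1,n} ∈ {00,11}) = d_n / 2` where `d_n = 4^{-n} C(2n+1,n)`;
equivalently, for model B started from the product measure with i.i.d. coordinates
uniform on `{∘,•}`, the density of particles at time `n` is `d_n / 2`. -/
theorem modelA_modelB_uniform_start {Ω : Type*} [MeasurableSpace Ω] (P : Measure Ω)
    [IsProbabilityMeasure P]
    -- the driving i.i.d. family for model A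
    (W : ℤ ⊕ (ℤ × ℕ) → Ω → Bool) (hWmeas : ∀ j, Measurable (W j))
    (hWindep : iIndepFun W P)
    (hWunif : ∀ j, P {ω | W j ω = true} = 1 / 2)
    (A : ℕ → Ω → ℤ → Bool) (hA0 : ∀ ω i, A 0 ω i = W (Sum.inl i) ω)
    (hA : ∀ n ω, A (n + 1) ω = modelA (A n ω) (fun i => W (Sum.inr (i, n)) ω))
    -- the driving i.i.d. family for model B
    (W' : ℤ ⊕ (ℤ × ℕ) → Ω → Bool) (hW'meas : ∀ j, Measurable (W' j))
    (hW'indep : iIndepFun W' P)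
    (hW'unif : ∀ j, P {ω | W' j ω = true} = 1 / 2)
    (Y : ℕ → Ω → ℤ → Bool) (hY0 : ∀ ω i, Y 0 ω i = W' (Sum.inl i) ω)
    (hY : ∀ n ω, Y (n + 1) ω = modelB (Y n ω) (fun i => W' (Sum.inr (i, n)) ω))
    (n : ℕ) :
    P {ω | A n ω 0 = A n ω 1} = (Nat.choose (2 * n + 1) n : ENNReal) / (2 * 4 ^ n) ∧
    P {ω | Y n ω 0 = true} = (Nat.choose (2 * n + 1) n : ENNReal) / (2 * 4 ^ n) :=
  ⟨ModelAB.measure_modelA_eq hWmeas hWindep hWunif hA0 hA n,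
    ModelAB.measure_modelB_eq hW'meas hW'indep hW'unif hY0 hY n⟩
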